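/- For all integers k1, k2 ≥ 1 with k1 ≤ k2, and every integer r ≥ 1, the local antimagic chromatic number of the edge-corona product of the double star S_{k1,k2} with the empty graph on r vertices satisfies 3 ≤ χ_la(S_{k1,k2} ⋄ K̄_r) ≤ 4. -/
import Mathlib


/-!
Local antimagic (total) labelings and chromatic numbers, firecracker graphs,
stars, double stars, joins, and edge-corona products.
-/

open scoped Classical

noncomputable section

namespace LocalAntimagic

variable {V : Type*} [Fintype V]

/-- The weight of a vertex `u` under an edge labeling `f`: the sum of the
labels of the edges incident with `u`. -/
def weight (G : SimpleGraph V) (f : Sym2 V → ℕ) (u : V) : ℕ :=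
  ∑ e ∈ G.edgeFinset, if u ∈ e then f e else 0

/-- `f` is a local antimagic labeling of `G`: it maps the edge set of `G`
bijectively onto `{1, …, |E(G)|}` and adjacent vertices get distinct weights. -/
def IsLocalAntimagic (G : SimpleGraph V) (f : Sym2 V → ℕ) : Prop :=
  Set.BijOn f G.edgeSet (Set.Icc 1 G.edgeFinset.card) ∧
    ∀ u v, G.Adj u v → weight G f u ≠ weight G f v

/-- The number of distinct colors (vertex weights) induced by `f`. -/
def colorCount (G : SimpleGraph V) (f : Sym2 V → ℕ) : ℕ :=
  (Finset.univ.image (weight G f)).card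

/-- The local antimagic chromatic number `χ_la(G)`: the least number of
distinct induced colors over all local antimagic labelings of `G`. -/
def chiLA (G : SimpleGraph V) : ℕ :=
  sInf {c | ∃ f, IsLocalAntimagic G f ∧ colorCount G f = c}

/-- The total weight of a vertex `u` under a total labeling `(gv, ge)`:
`gv u` plus the sum of the labels of the edges incident with `u`. -/
def totalWeight (G : SimpleGraph V) (gv : V → ℕ) (ge : Sym2 V → ℕ) (u : V) : ℕ :=
  gv u + weight G ge u

/-- `(gv, ge)` is a local antimagic total labeling of `G`: together the vertex
labels and edge labels form a bijection from `V(G) ∪ E(G)` onto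
`{1, …, |V(G)| + |E(G)|}`, and adjacent vertices get distinct total weights. -/
def IsLocalAntimagicTotal (G : SimpleGraph V) (gv : V → ℕ) (ge : Sym2 V → ℕ) : Prop :=
  Set.BijOn (Sum.elim gv ge)
    (Set.range Sum.inl ∪ Sum.inr '' G.edgeSet)
    (Set.Icc 1 (Fintype.card V + G.edgeFinset.card)) ∧
    ∀ u v, G.Adj u v → totalWeight G gv ge u ≠ totalWeight G gv ge v

/-- The number of distinct colors (total vertex weights) induced by `(gv, ge)`. -/
def totalColorCount (G : SimpleGraph V) (gv : V → ℕ) (ge : Sym2 V → ℕ) : ℕ :=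
  (Finset.univ.image (totalWeight G gv ge)).card

/-- The local antimagic total chromatic number `χ_lat(G)`. -/
def chiLAT (G : SimpleGraph V) : ℕ :=
  sInf {c | ∃ gv ge, IsLocalAntimagicTotal G gv ge ∧ totalColorCount G gv ge = c}

/-- The double star `S_{k₁,k₂}`: two adjacent centers `Sum.inl (Sum.inl ())`
and `Sum.inl (Sum.inr ())`, the first with `k₁` pendant leaves and the second
with `k₂` pendant leaves. -/
def doubleStar (k₁ k₂ : ℕ) : SimpleGraph ((Unit ⊕ Unit) ⊕ (Fin k₁ ⊕ Fin k₂)) :=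
  SimpleGraph.fromRel (fun a b =>
    match a, b with
    | Sum.inl (Sum.inl _), Sum.inl (Sum.inr _) => True
    | Sum.inl (Sum.inl _), Sum.inr (Sum.inl _) => True
    | Sum.inl (Sum.inr _), Sum.inr (Sum.inr _) => True
    | _, _ => False)

/-- The edge-corona product `G ⋄ H`: take one copy of `G` and one disjoint
copy of `H` for each edge `e` of `G`, joining both endpoints of `e` to every
vertex of the copy of `H` assigned to `e`. -/
def edgeCorona {W : Type*} (G : SimpleGraph V) (H : SimpleGraph W) :
    SimpleGraph (V ⊕ (G.edgeSet × W)) :=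
  SimpleGraph.fromRel (fun a b =>
    match a, b with
    | Sum.inl u, Sum.inl v => G.Adj u v
    | Sum.inl u, Sum.inr (e, _) => u ∈ (e : Sym2 V)
    | Sum.inr (e, w), Sum.inr (e', w') => e = e' ∧ H.Adj w w'
    | _, _ => False)



/-- The largest odd number `≤ m` (for `m ≥ 1`). -/
def nOdd (m : ℕ) : ℕ := if m % 2 = 1 then m else m - 1

def bet (m p : ℕ) : ℕ :=
  if p < nOdd m then
    (if p % 2 = 0 then (nOdd m - 1)/2 - p/2 else nOdd m - 1 - (p-1)/2)
  else m - 1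

def gam (m p : ℕ) : ℕ :=
  if p < nOdd m then
    (if p % 2 = 0 then nOdd m - 1 - p/2 else (nOdd m - 1)/2 - 1 - (p-1)/2)
  else m - 1

def sig (m r t p : ℕ) : ℕ :=
  if t + 3 ≤ r ∨ r % 2 = 1 then (if t % 2 = 0 then m - 1 - p else p)
  else if t + 2 = r then bet m p
  else if t + 1 = r then gam m p
  else p

def sigC (m r : ℕ) : ℕ :=
  if r % 2 = 1 then (r+1)*(m-1) else (r-2)*(m-1) + 3*(nOdd m - 1)

lemma nOdd_spec (hm : 3 ≤ m) :
    nOdd m % 2 = 1 ∧ m - 1 ≤ nOdd m ∧ nOdd m ≤ m ∧ 3 ≤ nOdd m := by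
  unfold nOdd; split_ifs <;> omega

lemma bet_lt (hm : 3 ≤ m) (hp : p < m) : bet m p < m := by
  have h := nOdd_spec hm
  unfold bet; split_ifs <;> omega

lemma gam_lt (hm : 3 ≤ m) (hp : p < m) : gam m p < m := by
  have h := nOdd_spec hm
  unfold gam; split_ifs <;> omega

lemma bet_inj (hm : 3 ≤ m) (hp : p < m) (hq : q < m)
    (h : bet m p = bet m q) : p = q := by
  have hs := nOdd_spec hm
  unfold bet at h; split_ifs at h <;> omega

lemma gam_inj (hm : 3 ≤ m) (hp : p < m) (hq : q < m)
    (h : gam m p = gam m q) : p = q := by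
  have hs := nOdd_spec hm
  unfold gam at h; split_ifs at h <;> omega

lemma bet_gam_sum (hm : 3 ≤ m) (hp : p < nOdd m) :
    2 * (p + bet m p + gam m p) = 3 * (nOdd m - 1) := by
  have hs := nOdd_spec hm
  unfold bet gam; split_ifs <;> omega

lemma sig_lt (hm : 3 ≤ m) (hp : p < m) : sig m r t p < m := by
  have h1 := bet_lt hm hp
  have h2 := gam_lt hm hp
  unfold sig; split_ifs <;> omega

lemma sig_inj (hm : 3 ≤ m) (hp : p < m) (hq : q < m)
    (h : sig m r t p = sig m r t q) : p = q := by
  unfold sig at h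
  split_ifs at h
  · omega
  · omega
  · exact bet_inj hm hp hq h
  · exact gam_inj hm hp hq h
  · omega

lemma sum_range_parity (a b u : ℕ) :
    ∑ t ∈ Finset.range u, (if t % 2 = 0 then a else b)
      = (u+1)/2 * a + u/2 * b := by
  induction u with
  | zero => simp
  | succ n ih =>
    rw [Finset.sum_range_succ, ih]
    rcases Nat.even_or_odd n with h | h
    · obtain ⟨c, hc⟩ := h
      have hn : n % 2 = 0 := by omega
      simp only [hn, if_pos]
      have e1 : (n+1)/2 = c := by omega
      have e2 : n/2 = c := by omega
      have e3 : (n+1+1)/2 = c+1 := by omega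
      rw [e3, e1, e2]; ring
    · obtain ⟨c, hc⟩ := h
      have hn : ¬ (n % 2 = 0) := by omega
      simp only [hn, if_neg, if_false]
      have e1 : (n+1)/2 = c+1 := by omega
      have e2 : n/2 = c := by omega
      have e3 : (n+1+1)/2 = c+1 := by omega
      rw [e3, e1, e2]; ring

lemma sig_sum_key (hm : 3 ≤ m) (hr : 1 ≤ r) (hp : p + 1 < m) :
    2 * (p + ∑ t ∈ Finset.range r, sig m r t p) = sigC m r := by
  have hs := nOdd_spec hm
  rcases Nat.even_or_odd r with he | ho
  · -- r even
    obtain ⟨e, hre⟩ := he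
    have hr2 : 2 ≤ r := by omega
    have hrodd : ¬ (r % 2 = 1) := by omega
    have hrange : Finset.range r = Finset.range (r - 2 + 1 + 1) := by
      congr 1; omega
    rw [hrange, Finset.sum_range_succ, Finset.sum_range_succ]
    have h1 : ∀ t ∈ Finset.range (r-2), sig m r t p = (if t % 2 = 0 then m - 1 - p else p) := by
      intro t ht
      simp only [Finset.mem_range] at ht
      unfold sig
      rw [if_pos]
      left; omega
    rw [Finset.sum_congr rfl h1, sum_range_parity]
    have h2 : sig m r (r-2) p = bet m p := by
      unfold sig
      rw [if_neg, if_pos (by omega)]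
      push_neg; exact ⟨by omega, by omega⟩
    have h3 : sig m r (r-2+1) p = gam m p := by
      unfold sig
      rw [if_neg, if_neg (by omega), if_pos (by omega)]
      push_neg; exact ⟨by omega, by omega⟩
    rw [h2, h3]
    have hbg := bet_gam_sum hm (show p < nOdd m by omega)
    have hC : sigC m r = (r-2)*(m-1) + 3*(nOdd m - 1) := by
      unfold sigC; rw [if_neg hrodd]
    rw [hC]
    have e1 : (r-2+1)/2 = e - 1 := by omega
    have e2 : (r-2)/2 = e - 1 := by omega
    rw [e1, e2]
    have key : (e-1)*(m-1-p) + (e-1)*p = (e-1)*(m-1) := by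
      rw [← Nat.mul_add]
      congr 1
      omega
    have h4 : (r-2)*(m-1) = 2*((e-1)*(m-1)) := by
      have : r - 2 = 2*(e-1) := by omega
      rw [this, Nat.mul_assoc]
    omega
  · obtain ⟨e, hre⟩ := ho
    have hrodd : r % 2 = 1 := by omega
    have h1 : ∀ t ∈ Finset.range r, sig m r t p = (if t % 2 = 0 then m - 1 - p else p) := by
      intro t _
      unfold sig
      rw [if_pos (Or.inr hrodd)]
    rw [Finset.sum_congr rfl h1, sum_range_parity]
    have hC : sigC m r = (r+1)*(m-1) := by
      unfold sigC; rw [if_pos hrodd]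
    rw [hC]
    have e1 : (r+1)/2 = e+1 := by omega
    have e2 : r/2 = e := by omega
    rw [e1, e2]
    have key : (e+1)*(m-1-p) + (e+1)*p = (e+1)*(m-1) := by
      rw [← Nat.mul_add]
      congr 1
      omega
    have hpe : e * p + p = (e+1) * p := by ring
    have h4 : (r+1)*(m-1) = 2*((e+1)*(m-1)) := by
      have : r + 1 = 2*(e+1) := by omega
      rw [this, Nat.mul_assoc]
    omega

lemma sigC_le (hm : 3 ≤ m) (hr : 1 ≤ r) : sigC m r ≤ (r+1)*(m-1) := by
  have hs := nOdd_spec hm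
  unfold sigC; split_ifs with h
  · exact le_refl _
  · have hr2 : 2 ≤ r := by omega
    have h1 : 3*(nOdd m - 1) ≤ 3*(m-1) := by omega
    have h2 : (r-2)*(m-1) + 3*(m-1) = (r+1)*(m-1) := by
      rw [← Nat.add_mul]
      congr 1
      omega
    omega

section Labels

open Finset

variable {m r k₁ k₂ : ℕ}

def bV (m r p : ℕ) : ℕ := r*m + 1 + p
def smallV (m r t p : ℕ) : ℕ := t*m + 1 + sig m r t p
def largeV (m r t p : ℕ) : ℕ := (2*r - t)*m + (m - sig m r t p)
def PV (m r : ℕ) : ℕ := r*(m*(2*r+1)+1)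
def QV (m r : ℕ) : ℕ := r*(r-1)*m + 2*r + sigC m r
def TV (m r : ℕ) : ℕ := bV m r 0 + ∑ t ∈ range r, smallV m r t 0

lemma small_large (hm : 3 ≤ m) (ht : t < r) (hp : p < m) :
    smallV m r t p + largeV m r t p = m*(2*r+1) + 1 := by
  have hσ := sig_lt (r := r) (t := t) hm hp
  unfold smallV largeV
  have h1 : t*m + (2*r - t)*m = (2*r)*m := by
    rw [← Nat.add_mul]; congr 1; omega
  have h2 : m*(2*r+1) = 2*r*m + m := by ring
  omega

lemma small_ge_one : 1 ≤ smallV m r t p := by unfold smallV; omega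

lemma small_le (hm : 3 ≤ m) (hp : p < m) : smallV m r t p ≤ t*m + m := by
  have hσ := sig_lt (r := r) (t := t) hm hp
  unfold smallV; omega

lemma twoSmallSum (hm : 3 ≤ m) (hr : 1 ≤ r) (hp : p + 1 < m) :
    2 * (∑ t ∈ range r, smallV m r t p) + 2*p = QV m r := by
  have hkey := sig_sum_key hm hr hp
  have h1 : ∑ t ∈ range r, smallV m r t p
      = (∑ t ∈ range r, t*m) + (∑ t ∈ range r, 1) + ∑ t ∈ range r, sig m r t p := by
    simp only [smallV]
    rw [Finset.sum_add_distrib, Finset.sum_add_distrib]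
  have h2 : ∑ t ∈ range r, t*m = (∑ t ∈ range r, t) * m := by
    rw [Finset.sum_mul]
  have h3 : (∑ t ∈ range r, t) * 2 = r * (r-1) := Finset.sum_range_id_mul_two r
  have h4 : ((∑ t ∈ range r, t) * 2) * m = (r * (r-1)) * m := by rw [h3]
  have h5 : ((∑ t ∈ range r, t) * 2) * m = ((∑ t ∈ range r, t) * m) * 2 := by ring
  have h6 : ∑ t ∈ range r, (1:ℕ) = r := by simp
  unfold QV
  omega

lemma twoTV (hm : 3 ≤ m) (hr : 1 ≤ r) : 2 * TV m r = 2*(r*m+1) + QV m r := by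
  have h := twoSmallSum (p := 0) hm hr (by omega)
  unfold TV bV
  omega

lemma leaf_eq (hm : 3 ≤ m) (hr : 1 ≤ r) (hp : p + 1 < m) :
    bV m r p + ∑ t ∈ range r, smallV m r t p = TV m r := by
  have h1 := twoSmallSum hm hr hp
  have h2 := twoTV hm hr
  unfold bV
  omega

lemma sumLarge (hm : 3 ≤ m) (hp : p < m) :
    (∑ t ∈ range r, smallV m r t p) + (∑ t ∈ range r, largeV m r t p) = PV m r := by
  rw [← Finset.sum_add_distrib]
  have h1 : ∀ t ∈ range r, smallV m r t p + largeV m r t p = m*(2*r+1)+1 := by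
    intro t ht
    exact small_large hm (Finset.mem_range.mp ht) hp
  rw [Finset.sum_congr rfl h1, Finset.sum_const, Finset.card_range, smul_eq_mul]
  rfl

lemma QV_le (hm : 3 ≤ m) (hr : 1 ≤ r) : QV m r ≤ r*r*m + m + r := by
  have h1 := sigC_le (r := r) hm hr
  obtain ⟨s, rfl⟩ : ∃ s, r = s + 1 := ⟨r - 1, by omega⟩
  obtain ⟨n, rfl⟩ : ∃ n, m = n + 3 := ⟨m - 3, by omega⟩
  have e : n + 3 - 1 = n + 2 := by omega
  rw [e] at h1
  unfold QV
  simp only [Nat.add_sub_cancel] at h1 ⊢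
  nlinarith [h1]

lemma QV_lt_PV (hm : 3 ≤ m) (hr : 1 ≤ r) : QV m r < PV m r := by
  have h1 := QV_le hm hr
  have h2 : PV m r = 2*(r*r*m) + r*m + r := by unfold PV; ring
  have h3 : m ≤ r*m := Nat.le_mul_of_pos_left m hr
  have h4 : 1 ≤ r*r*m := by
    have : 1*1*1 ≤ r*r*m := by
      apply Nat.mul_le_mul (Nat.mul_le_mul hr hr) (by omega)
    omega
  omega

lemma smallSum_le (hm : 3 ≤ m) (hp : p < m) :
    2 * (∑ t ∈ range r, smallV m r t p) ≤ r*(r-1)*m + 2*r*m := by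
  have h1 : ∑ t ∈ range r, smallV m r t p ≤ ∑ t ∈ range r, (t*m + m) :=
    Finset.sum_le_sum (fun t _ => small_le hm hp)
  have h2 : ∑ t ∈ range r, (t*m + m) = (∑ t ∈ range r, t)*m + r*m := by
    rw [Finset.sum_add_distrib, Finset.sum_const, Finset.card_range, smul_eq_mul,
      Finset.sum_mul]
  have h3 : (∑ t ∈ range r, t) * 2 = r * (r-1) := Finset.sum_range_id_mul_two r
  have h4 : ((∑ t ∈ range r, t) * 2) * m = (r * (r-1)) * m := by rw [h3]
  have h5 : ((∑ t ∈ range r, t) * 2) * m = ((∑ t ∈ range r, t) * m) * 2 := by ring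
  have h6 : 2*r*m = 2*(r*m) := by ring
  omega

lemma smallSum_ge : r ≤ ∑ t ∈ range r, smallV m r t p := by
  calc r = ∑ t ∈ range r, 1 := by simp
  _ ≤ _ := Finset.sum_le_sum (fun t _ => small_ge_one)

def W1V (m r k₁ : ℕ) : ℕ :=
  (∑ q ∈ range k₁, bV m r q) + bV m r (m-1)
    + (∑ q ∈ range k₁, ∑ t ∈ range r, largeV m r t q)
    + ∑ t ∈ range r, smallV m r t (m-1)

def W2V (m r k₁ : ℕ) : ℕ :=
  (∑ q ∈ Ico k₁ (m-1), bV m r q) + bV m r (m-1)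
    + (∑ q ∈ Ico k₁ (m-1), ∑ t ∈ range r, largeV m r t q)
    + ∑ t ∈ range r, largeV m r t (m-1)

lemma sumlarge_id (hm : 3 ≤ m) (hr : 1 ≤ r) (hq : q + 1 < m) :
    2*(∑ t ∈ range r, largeV m r t q) + QV m r = 2*PV m r + 2*q := by
  have h1 := sumLarge (p := q) (r := r) hm (by omega)
  have h2 := twoSmallSum hm hr hq
  omega

lemma E1 (hm : 3 ≤ m) (hr : 1 ≤ r) (hk : k₁ + 2 ≤ m) :
    2 * W1V m r k₁ + k₁ * QV m r
      = 2*(∑ q ∈ range k₁, bV m r q) + 2*bV m r (m-1) + 2*(k₁*PV m r)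
        + 2*(∑ q ∈ range k₁, q) + 2*(∑ t ∈ range r, smallV m r t (m-1)) := by
  have hsum : ∑ q ∈ range k₁, (2*(∑ t ∈ range r, largeV m r t q) + QV m r)
      = ∑ q ∈ range k₁, (2*PV m r + 2*q) := by
    refine Finset.sum_congr rfl (fun q hq => ?_)
    have := Finset.mem_range.mp hq
    exact sumlarge_id hm hr (by omega)
  rw [Finset.sum_add_distrib, Finset.sum_add_distrib, Finset.sum_const, Finset.sum_const,
    Finset.card_range, smul_eq_mul, smul_eq_mul, ← Finset.mul_sum, ← Finset.mul_sum] at hsum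
  unfold W1V
  have hlink : k₁*(2*PV m r) = 2*(k₁*PV m r) := by ring
  omega

lemma E2 (hm : 3 ≤ m) (hr : 1 ≤ r) (hk : k₁ + 2 ≤ m) (hm2 : m = k₁ + k₂ + 1) :
    2 * W2V m r k₁ + k₂ * QV m r + 2*(∑ t ∈ range r, smallV m r t (m-1))
      = 2*(∑ q ∈ Ico k₁ (m-1), bV m r q) + 2*bV m r (m-1) + 2*((k₂+1)*PV m r)
        + 2*(∑ q ∈ Ico k₁ (m-1), q) := by
  have hsum : ∑ q ∈ Ico k₁ (m-1), (2*(∑ t ∈ range r, largeV m r t q) + QV m r)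
      = ∑ q ∈ Ico k₁ (m-1), (2*PV m r + 2*q) := by
    refine Finset.sum_congr rfl (fun q hq => ?_)
    have := Finset.mem_Ico.mp hq
    exact sumlarge_id hm hr (by omega)
  have hcard : (Ico k₁ (m-1)).card = k₂ := by
    rw [Nat.card_Ico]; omega
  rw [Finset.sum_add_distrib, Finset.sum_add_distrib, Finset.sum_const, Finset.sum_const,
    hcard, smul_eq_mul, smul_eq_mul, ← Finset.mul_sum, ← Finset.mul_sum] at hsum
  have hlast : 2*(∑ t ∈ range r, largeV m r t (m-1))
      + 2*(∑ t ∈ range r, smallV m r t (m-1)) = 2 * PV m r := by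
    have := sumLarge (p := m-1) (r := r) hm (by omega)
    omega
  unfold W2V
  have hPP : 2*((k₂+1)*PV m r) = 2*(k₂*PV m r) + 2*PV m r := by ring
  have hlink : k₂*(2*PV m r) = 2*(k₂*PV m r) := by ring
  omega

lemma rr_link (hr : 1 ≤ r) : r*(r-1)*m + r*m = r*r*m := by
  obtain ⟨s, rfl⟩ : ∃ s, r = s + 1 := ⟨r - 1, by omega⟩
  simp only [Nat.add_sub_cancel]
  ring

lemma bV_last : bV m r (m-1) = r*m + (m-1) + 1 := by unfold bV; omega

lemma sigC_one : sigC m 1 = 2*(m-1) := by unfold sigC; norm_num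

lemma sigC_three : sigC m 3 = 4*(m-1) := by unfold sigC; norm_num

lemma sigC_two (hm : 3 ≤ m) : sigC m 2 ≤ 3*(m-1) := by
  have hs := nOdd_spec hm
  unfold sigC; norm_num; omega

lemma G1 (hm : 3 ≤ m) (hr : 1 ≤ r) : TV m r ≠ m*(2*r+1)+1 := by
  have h2T := twoTV (m := m) (r := r) hm hr
  have hS : m*(2*r+1) = 2*(r*m) + m := by ring
  rcases Nat.lt_or_ge r 4 with h4 | h4
  · interval_cases r
    · have hs1 : sigC m 1 = 2*(m-1) := sigC_one
      unfold QV at h2T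
      omega
    · have hs2 := sigC_two hm
      unfold QV at h2T
      omega
    · have hs3 : sigC m 3 = 4*(m-1) := sigC_three
      unfold QV at h2T
      omega
  · -- r ≥ 4 : TV > S
    intro hEq
    have h1 : r*3 ≤ r*(r-1) := Nat.mul_le_mul_left r (by omega)
    have h2 : (r*3)*m ≤ (r*(r-1))*m := Nat.mul_le_mul_right m h1
    have h3 : (r*3)*m = 3*(r*m) := by ring
    have h4' : 4*m ≤ r*m := Nat.mul_le_mul_right m (by omega)
    have hQ0 : r*(r-1)*m + 2*r ≤ QV m r := by unfold QV; omega
    omega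

section Ineqs

variable (hm : 3 ≤ m) (hr : 1 ≤ r) (hk₁ : 1 ≤ k₁) (hkk : k₁ ≤ k₂)
  (hm2 : m = k₁ + k₂ + 1)

include hm hr hk₁ hkk hm2

omit hm hr hk₁ hkk hm2 in
lemma sum_range_le_Ico (f : ℕ → ℕ) (hmono : ∀ i, f i ≤ f (k₁+i)) (hkk : k₁ ≤ k₂) :
    ∑ q ∈ range k₁, f q ≤ ∑ q ∈ Ico k₁ (k₁+k₂), f q := by
  rw [Finset.sum_Ico_eq_sum_range]
  simp only [Nat.add_sub_cancel_left]
  calc ∑ q ∈ range k₁, f q ≤ ∑ q ∈ range k₁, f (k₁ + q) :=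
        Finset.sum_le_sum (fun i _ => hmono i)
  _ ≤ ∑ q ∈ range k₂, f (k₁ + q) :=
        Finset.sum_le_sum_of_subset (Finset.range_subset_range.mpr hkk)

lemma hb1 : r*m + 1 ≤ ∑ q ∈ range k₁, bV m r q := by
  calc r*m+1 = bV m r 0 := by unfold bV; omega
  _ ≤ _ := Finset.single_le_sum (f := fun q => bV m r q) (fun _ _ => Nat.zero_le _)
      (Finset.mem_range.mpr (by omega))

lemma hbI : r*m + 1 ≤ ∑ q ∈ Ico k₁ (m-1), bV m r q := by
  calc r*m+1 ≤ bV m r k₁ := by unfold bV; omega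
  _ ≤ _ := Finset.single_le_sum (f := fun q => bV m r q) (fun _ _ => Nat.zero_le _)
      (Finset.mem_Ico.mpr ⟨le_refl _, by omega⟩)

lemma G2 : m*(2*r+1)+1 < W1V m r k₁ := by
  have hE1 := E1 (k₁ := k₁) hm hr (by omega)
  have hQP := QV_lt_PV (r := r) hm hr
  have hq : k₁*QV m r ≤ k₁*PV m r := Nat.mul_le_mul_left k₁ (le_of_lt hQP)
  have hb := hb1 (m := m) (r := r) (k₁ := k₁) hm hr hk₁ hkk hm2
  have hbm : bV m r (m-1) = r*m + m := by unfold bV; omega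
  have hsm := smallSum_ge (m := m) (r := r) (p := m-1)
  have hS : m*(2*r+1) = 2*(r*m) + m := by ring
  omega

lemma G3 : m*(2*r+1)+1 < W2V m r k₁ := by
  have hE2 := E2 (k₁ := k₁) (k₂ := k₂) hm hr (by omega) hm2
  have hQP := QV_lt_PV (r := r) hm hr
  have hq : k₂*QV m r ≤ k₂*PV m r := Nat.mul_le_mul_left k₂ (le_of_lt hQP)
  have hb := hbI (m := m) (r := r) (k₁ := k₁) hm hr hk₁ hkk hm2
  have hbm : bV m r (m-1) = r*m + m := by unfold bV; omega
  have hsm := smallSum_le (m := m) (r := r) (p := m-1) hm (by omega)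
  have hrr := rr_link (m := m) hr
  have hPV : PV m r = 2*(r*r*m) + r*m + r := by unfold PV; ring
  have hPP : 2*((k₂+1)*PV m r) = 2*(k₂*PV m r) + 2*PV m r := by ring
  have hS : m*(2*r+1) = 2*(r*m) + m := by ring
  have h2rm : 2*r*m = 2*(r*m) := by ring
  omega

lemma G4 : TV m r < W1V m r k₁ := by
  have hE1 := E1 (k₁ := k₁) hm hr (by omega)
  have h2T := twoTV (m := m) (r := r) hm hr
  have hQP := QV_lt_PV (r := r) hm hr
  have hq : k₁*QV m r ≤ k₁*PV m r := Nat.mul_le_mul_left k₁ (le_of_lt hQP)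
  have hp1 : PV m r ≤ k₁*PV m r := Nat.le_mul_of_pos_left _ (by omega)
  have hb := hb1 (m := m) (r := r) (k₁ := k₁) hm hr hk₁ hkk hm2
  have hbm : bV m r (m-1) = r*m + m := by unfold bV; omega
  have hsm := smallSum_ge (m := m) (r := r) (p := m-1)
  omega

lemma G5 : TV m r < W2V m r k₁ := by
  have hE2 := E2 (k₁ := k₁) (k₂ := k₂) hm hr (by omega) hm2
  have h2T := twoTV (m := m) (r := r) hm hr
  have hQP := QV_lt_PV (r := r) hm hr
  have hq : k₂*QV m r ≤ k₂*PV m r := Nat.mul_le_mul_left k₂ (le_of_lt hQP)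
  have hQ1 : QV m r ≤ k₂*QV m r + QV m r := by omega
  have hb := hbI (m := m) (r := r) (k₁ := k₁) hm hr hk₁ hkk hm2
  have hbm : bV m r (m-1) = r*m + m := by unfold bV; omega
  have hsm := smallSum_le (m := m) (r := r) (p := m-1) hm (by omega)
  have hrr := rr_link (m := m) hr
  have hPV : PV m r = 2*(r*r*m) + r*m + r := by unfold PV; ring
  have hPP : 2*((k₂+1)*PV m r) = 2*(k₂*PV m r) + 2*PV m r := by ring
  have hQQ : QV m r < PV m r := hQP
  have h2rm : 2*r*m = 2*(r*m) := by ring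
  omega

lemma G6 : W1V m r k₁ < W2V m r k₁ := by
  have hE1 := E1 (k₁ := k₁) (m := m) (r := r) hm hr (by omega)
  have hE2 := E2 (k₁ := k₁) (k₂ := k₂) hm hr (by omega) hm2
  have hQP := QV_lt_PV (r := r) hm hr
  have hdiff : k₂*QV m r + k₁*PV m r ≤ k₂*PV m r + k₁*QV m r := by
    obtain ⟨d, rfl⟩ : ∃ d, k₂ = k₁ + d := ⟨k₂ - k₁, by omega⟩
    have h1 : (k₁+d)*QV m r = k₁*QV m r + d*QV m r := by ring
    have h2 : (k₁+d)*PV m r = k₁*PV m r + d*PV m r := by ring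
    have h3 : d*QV m r ≤ d*PV m r := Nat.mul_le_mul_left d (le_of_lt hQP)
    omega
  have hkP : k₁*PV m r ≤ k₂*PV m r := Nat.mul_le_mul_right _ hkk
  have hmb : ∑ q ∈ range k₁, bV m r q ≤ ∑ q ∈ Ico k₁ (m-1), bV m r q := by
    have := sum_range_le_Ico (k₁ := k₁) (k₂ := k₂) (fun q => bV m r q)
      (fun i => by show bV m r i ≤ bV m r (k₁+i); unfold bV; omega) hkk
    have hmm : m - 1 = k₁ + k₂ := by omega
    rw [hmm]
    exact this
  have hmq : ∑ q ∈ range k₁, q ≤ ∑ q ∈ Ico k₁ (m-1), q := by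
    have := sum_range_le_Ico (k₁ := k₁) (k₂ := k₂) (fun q => q)
      (fun i => by show i ≤ k₁ + i; omega) hkk
    have hmm : m - 1 = k₁ + k₂ := by omega
    rw [hmm]
    exact this
  have hsm := smallSum_le (m := m) (r := r) (p := m-1) hm (by omega)
  have hrr := rr_link (m := m) hr
  have hPV : PV m r = 2*(r*r*m) + r*m + r := by unfold PV; ring
  have hPP : 2*((k₂+1)*PV m r) = 2*(k₂*PV m r) + 2*PV m r := by ring
  have h2rm : 2*r*m = 2*(r*m) := by ring
  omega

end Ineqs

end Labels




section Graphs

variable (k₁ k₂ : ℕ)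

abbrev DSV := (Unit ⊕ Unit) ⊕ (Fin k₁ ⊕ Fin k₂)

def cA : DSV k₁ k₂ := Sum.inl (Sum.inl ())
def cB : DSV k₁ k₂ := Sum.inl (Sum.inr ())

def endA (p : ℕ) : DSV k₁ k₂ := if p < k₁ then cA k₁ k₂ else cB k₁ k₂

def endB (p : ℕ) : DSV k₁ k₂ :=
  if h : p < k₁ then Sum.inr (Sum.inl ⟨p, h⟩)
  else if h2 : p < k₁ + k₂ then Sum.inr (Sum.inr ⟨p - k₁, by omega⟩)
  else cA k₁ k₂

lemma base_adj (p : ℕ) :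
    (doubleStar k₁ k₂).Adj (endA k₁ k₂ p) (endB k₁ k₂ p) := by
  unfold doubleStar endA endB cA cB
  rw [SimpleGraph.fromRel_adj]
  split_ifs with h h2
  · exact ⟨by simp, Or.inl trivial⟩
  · exact ⟨by simp, Or.inl trivial⟩
  · exact ⟨by simp, Or.inr trivial⟩

def eG (p : ℕ) : (doubleStar k₁ k₂).edgeSet :=
  ⟨s(endA k₁ k₂ p, endB k₁ k₂ p), (base_adj k₁ k₂ p)⟩

lemma endA_ne_endB (p : ℕ) : endA k₁ k₂ p ≠ endB k₁ k₂ p :=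
  (base_adj k₁ k₂ p).ne

lemma endA_eq_cA {p : ℕ} (h : p < k₁) : endA k₁ k₂ p = cA k₁ k₂ := if_pos h
lemma endA_eq_cB {p : ℕ} (h : k₁ ≤ p) : endA k₁ k₂ p = cB k₁ k₂ := if_neg (by omega)
lemma endB_eq_x {p : ℕ} (h : p < k₁) :
    endB k₁ k₂ p = Sum.inr (Sum.inl ⟨p, h⟩) := dif_pos h
lemma endB_eq_y {p : ℕ} (h1 : k₁ ≤ p) (h2 : p < k₁ + k₂) :
    endB k₁ k₂ p = Sum.inr (Sum.inr ⟨p - k₁, by omega⟩) := by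
  unfold endB; rw [dif_neg (by omega), dif_pos h2]
lemma endB_eq_cA {p : ℕ} (h : k₁ + k₂ ≤ p) : endB k₁ k₂ p = cA k₁ k₂ := by
  unfold endB; rw [dif_neg (by omega), dif_neg (by omega)]

lemma eG_coe (p : ℕ) :
    (eG k₁ k₂ p : Sym2 (DSV k₁ k₂)) = s(endA k₁ k₂ p, endB k₁ k₂ p) := rfl

lemma eG_inj {p q : ℕ} (hp : p < k₁ + k₂ + 1) (hq : q < k₁ + k₂ + 1)
    (h : (eG k₁ k₂ p : Sym2 (DSV k₁ k₂)) = eG k₁ k₂ q) : p = q := by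
  rw [eG_coe, eG_coe] at h
  unfold endA endB cA cB at h
  simp only [Sym2.eq_iff] at h
  split_ifs at h <;> simp_all <;> omega

lemma eG_cover (e : Sym2 (DSV k₁ k₂)) (he : e ∈ (doubleStar k₁ k₂).edgeSet) :
    ∃ p, p < k₁ + k₂ + 1 ∧ e = (eG k₁ k₂ p : Sym2 (DSV k₁ k₂)) := by
  induction e with
  | _ a b =>
    rw [SimpleGraph.mem_edgeSet] at he
    unfold doubleStar at he
    rw [SimpleGraph.fromRel_adj] at he
    obtain ⟨hne, hrel⟩ := he
    rcases a with (⟨⟩|⟨⟩)|(i|j) <;> rcases b with (⟨⟩|⟨⟩)|(i'|j') <;>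
      simp only [or_false, false_or, or_self] at hrel
    · -- cA cB : center edge p = k₁+k₂
      refine ⟨k₁ + k₂, by omega, ?_⟩
      rw [eG_coe, endA_eq_cB k₁ k₂ (by omega), endB_eq_cA k₁ k₂ (by omega)]
      exact Sym2.eq_swap.symm
    · -- cA, x i'
      refine ⟨i', by omega, ?_⟩
      rw [eG_coe, endA_eq_cA k₁ k₂ i'.isLt, endB_eq_x k₁ k₂ i'.isLt]
      simp [cA]
    · -- cB cA
      refine ⟨k₁ + k₂, by omega, ?_⟩
      rw [eG_coe, endA_eq_cB k₁ k₂ (by omega), endB_eq_cA k₁ k₂ (by omega)]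
      rfl
    · -- cB, y j'
      refine ⟨k₁ + j', by omega, ?_⟩
      rw [eG_coe, endA_eq_cB k₁ k₂ (by omega), endB_eq_y k₁ k₂ (by omega) (by omega)]
      simp [cB]
    · -- x i, cA
      refine ⟨i, by omega, ?_⟩
      rw [eG_coe, endA_eq_cA k₁ k₂ i.isLt, endB_eq_x k₁ k₂ i.isLt, Sym2.eq_swap]
      simp [cA]
    · -- y j, cB
      refine ⟨k₁ + j, by omega, ?_⟩
      rw [eG_coe, endA_eq_cB k₁ k₂ (by omega), endB_eq_y k₁ k₂ (by omega) (by omega),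
        Sym2.eq_swap]
      simp [cB]

end Graphs

section Corona

variable (k₁ k₂ r : ℕ)

abbrev WV := DSV k₁ k₂ ⊕ ((doubleStar k₁ k₂).edgeSet × Fin r)

abbrev Gr : SimpleGraph (WV k₁ k₂ r) :=
  edgeCorona (doubleStar k₁ k₂) (⊥ : SimpleGraph (Fin r))

abbrev Idx := Fin (k₁+k₂+1) ⊕ (Fin (k₁+k₂+1) × Fin r × Bool)

def EE : Idx k₁ k₂ r → Sym2 (WV k₁ k₂ r)
  | .inl p => s(Sum.inl (endA k₁ k₂ p), Sum.inl (endB k₁ k₂ p))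
  | .inr (p, t, side) =>
      s(Sum.inl (if side then endA k₁ k₂ p else endB k₁ k₂ p),
        Sum.inr (eG k₁ k₂ p, t))

lemma Gr_adj_base {u v : DSV k₁ k₂} (h : (doubleStar k₁ k₂).Adj u v) :
    (Gr k₁ k₂ r).Adj (Sum.inl u) (Sum.inl v) := by
  unfold Gr edgeCorona
  rw [SimpleGraph.fromRel_adj]
  exact ⟨by simpa using h.ne, Or.inl h⟩

lemma Gr_adj_corona (u : DSV k₁ k₂) (e : (doubleStar k₁ k₂).edgeSet) (w : Fin r)
    (h : u ∈ (e : Sym2 (DSV k₁ k₂))) :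
    (Gr k₁ k₂ r).Adj (Sum.inl u) (Sum.inr (e, w)) := by
  unfold Gr edgeCorona
  rw [SimpleGraph.fromRel_adj]
  exact ⟨by simp, Or.inl h⟩

lemma EE_mem (i : Idx k₁ k₂ r) : EE k₁ k₂ r i ∈ (Gr k₁ k₂ r).edgeSet := by
  rcases i with p | ⟨p, t, side⟩
  · exact ((Gr k₁ k₂ r).mem_edgeSet).mpr (Gr_adj_base k₁ k₂ r (base_adj k₁ k₂ p))
  · rcases side with _ | _
    · exact ((Gr k₁ k₂ r).mem_edgeSet).mpr
        (Gr_adj_corona k₁ k₂ r _ _ t (Sym2.mem_mk_right _ _))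
    · exact ((Gr k₁ k₂ r).mem_edgeSet).mpr
        (Gr_adj_corona k₁ k₂ r _ _ t (Sym2.mem_mk_left _ _))

lemma EE_inj : Function.Injective (EE k₁ k₂ r) := by
  intro i j h
  rcases i with p | ⟨p, t, side⟩ <;> rcases j with q | ⟨q, s, side'⟩
  · simp only [EE, Sym2.eq_iff, Sum.inl.injEq] at h
    have : (eG k₁ k₂ p : Sym2 (DSV k₁ k₂)) = eG k₁ k₂ q := by
      rw [eG_coe, eG_coe, Sym2.eq_iff]
      exact h
    have := eG_inj k₁ k₂ p.isLt q.isLt this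
    exact congrArg Sum.inl (Fin.ext this)
  · simp [EE, Sym2.eq_iff] at h
  · simp [EE, Sym2.eq_iff] at h
  · simp only [EE, Sym2.eq_iff, Sum.inl.injEq, Sum.inr.injEq, Prod.mk.injEq] at h
    rcases h with ⟨h1, h2, h3⟩ | ⟨h1, h2⟩
    · have hpq : p = q := Fin.ext (eG_inj k₁ k₂ p.isLt q.isLt (congrArg Subtype.val h2))
      subst hpq
      subst h3
      rcases side with _ | _ <;> rcases side' with _ | _
      · rfl
      · simp only [if_true, if_false, Bool.false_eq_true] at h1 ⊢
        exact absurd h1.symm (endA_ne_endB k₁ k₂ p)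
      · simp only [if_true, if_false] at h1
        exact absurd h1 (endA_ne_endB k₁ k₂ p)
      · rfl
    · exact absurd h1 (by simp)

lemma EE_cover (e : Sym2 (WV k₁ k₂ r)) (he : e ∈ (Gr k₁ k₂ r).edgeSet) :
    ∃ i, EE k₁ k₂ r i = e := by
  induction e with
  | _ a b =>
    rw [SimpleGraph.mem_edgeSet] at he
    unfold Gr edgeCorona at he
    rw [SimpleGraph.fromRel_adj] at he
    obtain ⟨hne, hrel⟩ := he
    rcases a with u | ⟨e0, w⟩ <;> rcases b with v | ⟨e0', w'⟩
    · have hadj : (doubleStar k₁ k₂).Adj u v := by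
        rcases hrel with h | h
        · exact h
        · exact h.symm
      obtain ⟨p, hp, hep⟩ := eG_cover k₁ k₂ s(u, v) hadj
      refine ⟨Sum.inl ⟨p, hp⟩, ?_⟩
      rw [eG_coe] at hep
      have := congrArg (Sym2.map (Sum.inl : DSV k₁ k₂ → WV k₁ k₂ r)) hep
      rw [Sym2.map_pair_eq, Sym2.map_pair_eq] at this
      exact (this.symm : _)
    · -- inl u, inr (e0', w')
      have hmem : u ∈ (e0' : Sym2 (DSV k₁ k₂)) := by
        rcases hrel with h | h
        · exact h
        · exact h.elim
      obtain ⟨p, hp, hep⟩ := eG_cover k₁ k₂ e0'.1 e0'.2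
      have he0 : e0' = eG k₁ k₂ p := Subtype.ext hep
      subst he0
      rw [eG_coe, Sym2.mem_iff] at hmem
      rcases hmem with h | h
      · exact ⟨Sum.inr (⟨p, hp⟩, w', true), by simp [EE, h]⟩
      · exact ⟨Sum.inr (⟨p, hp⟩, w', false), by simp [EE, h]⟩
    · -- inr, inl
      have hmem : v ∈ (e0 : Sym2 (DSV k₁ k₂)) := by
        rcases hrel with h | h
        · exact h.elim
        · exact h
      obtain ⟨p, hp, hep⟩ := eG_cover k₁ k₂ e0.1 e0.2
      have he0 : e0 = eG k₁ k₂ p := Subtype.ext hep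
      subst he0
      rw [eG_coe, Sym2.mem_iff] at hmem
      rcases hmem with h | h
      · exact ⟨Sum.inr (⟨p, hp⟩, w, true), by rw [Sym2.eq_swap]; simp [EE, h]⟩
      · exact ⟨Sum.inr (⟨p, hp⟩, w, false), by rw [Sym2.eq_swap]; simp [EE, h]⟩
    · simp at hrel

lemma edgeFinset_eq :
    (Gr k₁ k₂ r).edgeFinset = Finset.univ.image (EE k₁ k₂ r) := by
  ext e
  simp only [SimpleGraph.mem_edgeFinset, Finset.mem_image, Finset.mem_univ, true_and]
  constructor
  · intro he
    obtain ⟨i, hi⟩ := EE_cover k₁ k₂ r e he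
    exact ⟨i, hi⟩
  · rintro ⟨i, rfl⟩
    exact EE_mem k₁ k₂ r i

lemma card_edge :
    (Gr k₁ k₂ r).edgeFinset.card = (k₁+k₂+1)*(2*r+1) := by
  rw [edgeFinset_eq, Finset.card_image_of_injective _ (EE_inj k₁ k₂ r)]
  simp only [Finset.card_univ, Fintype.card_sum, Fintype.card_fin, Fintype.card_prod,
    Fintype.card_bool]
  ring

end Corona



section LabelingW

open Finset

variable (k₁ k₂ r : ℕ)

lemma slot_inj {m t s a b : ℕ} (ha1 : 1 ≤ a) (ha2 : a ≤ m) (hb1 : 1 ≤ b) (hb2 : b ≤ m)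
    (h : t*m + a = s*m + b) : t = s ∧ a = b := by
  rcases lt_trichotomy t s with hl | he | hl
  · exfalso
    have h1 : (t+1)*m ≤ s*m := Nat.mul_le_mul_right m (by omega)
    have h2 : (t+1)*m = t*m + m := by ring
    omega
  · subst he; omega
  · exfalso
    have h1 : (s+1)*m ≤ t*m := Nat.mul_le_mul_right m (by omega)
    have h2 : (s+1)*m = s*m + m := by ring
    omega

def labI : Idx k₁ k₂ r → ℕ
  | .inl p => bV (k₁+k₂+1) r ↑p
  | .inr (p, t, false) => smallV (k₁+k₂+1) r ↑t ↑p
  | .inr (p, t, true) => largeV (k₁+k₂+1) r ↑t ↑p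

variable (hk₁ : 1 ≤ k₁) (hkk : k₁ ≤ k₂) (hr : 1 ≤ r)

include hk₁ hkk hr

omit hr in
lemma hm3 : 3 ≤ k₁ + k₂ + 1 := by omega

lemma small_bounds {t p : ℕ} (ht : t < r) (hp : p < k₁+k₂+1) :
    t*(k₁+k₂+1) + 1 ≤ smallV (k₁+k₂+1) r t p
      ∧ smallV (k₁+k₂+1) r t p ≤ t*(k₁+k₂+1) + (k₁+k₂+1) := by
  have hσ := sig_lt (r := r) (t := t) (hm3 k₁ k₂ hk₁ hkk) hp
  unfold smallV; omega

lemma large_bounds {t p : ℕ} (ht : t < r) (hp : p < k₁+k₂+1) :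
    (2*r-t)*(k₁+k₂+1) + 1 ≤ largeV (k₁+k₂+1) r t p
      ∧ largeV (k₁+k₂+1) r t p ≤ (2*r-t)*(k₁+k₂+1) + (k₁+k₂+1) := by
  have hσ := sig_lt (r := r) (t := t) (hm3 k₁ k₂ hk₁ hkk) hp
  unfold largeV; omega

lemma labI_mem (i : Idx k₁ k₂ r) :
    labI k₁ k₂ r i ∈ Finset.Icc 1 ((k₁+k₂+1)*(2*r+1)) := by
  have hMM : (k₁+k₂+1)*(2*r+1) = 2*r*(k₁+k₂+1) + (k₁+k₂+1) := by ring
  rw [Finset.mem_Icc]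
  rcases i with p | ⟨p, t, side⟩
  · have hp := p.isLt
    simp only [labI, bV]
    have h1 : (r+1)*(k₁+k₂+1) ≤ (2*r)*(k₁+k₂+1) := Nat.mul_le_mul_right (k₁+k₂+1) (by omega)
    have h2 : (r+1)*(k₁+k₂+1) = r*(k₁+k₂+1) + (k₁+k₂+1) := by ring
    have h3 : 2*r*(k₁+k₂+1) = (2*r)*(k₁+k₂+1) := by ring
    omega
  · rcases side with _ | _
    · have hb := small_bounds k₁ k₂ r hk₁ hkk hr t.isLt p.isLt
      have h1 : (↑t+1)*(k₁+k₂+1) ≤ r*(k₁+k₂+1) := Nat.mul_le_mul_right (k₁+k₂+1) (by omega)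
      have h2 : (↑t+1)*(k₁+k₂+1) = ↑t*(k₁+k₂+1) + (k₁+k₂+1) := by ring
      have h3 : r*(k₁+k₂+1) ≤ 2*r*(k₁+k₂+1) := by
        have : r*(k₁+k₂+1) ≤ 2*(r*(k₁+k₂+1)) := by omega
        have e : 2*(r*(k₁+k₂+1)) = 2*r*(k₁+k₂+1) := by ring
        omega
      simp only [labI]
      omega
    · have hb := large_bounds k₁ k₂ r hk₁ hkk hr t.isLt p.isLt
      have h1 : (2*r-↑t)*(k₁+k₂+1) ≤ (2*r)*(k₁+k₂+1) := Nat.mul_le_mul_right (k₁+k₂+1) (by omega)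
      have h2 : (2*r)*(k₁+k₂+1) = 2*r*(k₁+k₂+1) := by ring
      simp only [labI]
      omega

lemma labI_inj : Function.Injective (labI k₁ k₂ r) := by
  intro i j h
  have hm : 3 ≤ k₁+k₂+1 := by omega
  rcases i with p | ⟨p, t, side⟩ <;> rcases j with q | ⟨q, s, side'⟩
  · simp only [labI, bV] at h
    have : p = q := Fin.ext (by omega)
    rw [this]
  · exfalso
    rcases side' with _ | _ <;> simp only [labI, bV] at h
    · have hb := small_bounds k₁ k₂ r hk₁ hkk hr s.isLt q.isLt
      have h1 : (↑s+1)*(k₁+k₂+1) ≤ r*(k₁+k₂+1) := Nat.mul_le_mul_right (k₁+k₂+1) (by omega)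
      have h2 : (↑s+1)*(k₁+k₂+1) = ↑s*(k₁+k₂+1) + (k₁+k₂+1) := by ring
      omega
    · have hb := large_bounds k₁ k₂ r hk₁ hkk hr s.isLt q.isLt
      have h1 : (r+1)*(k₁+k₂+1) ≤ (2*r-↑s)*(k₁+k₂+1) := Nat.mul_le_mul_right (k₁+k₂+1) (by omega)
      have h2 : (r+1)*(k₁+k₂+1) = r*(k₁+k₂+1) + (k₁+k₂+1) := by ring
      have hp := p.isLt
      omega
  · exfalso
    rcases side with _ | _ <;> simp only [labI, bV] at h
    · have hb := small_bounds k₁ k₂ r hk₁ hkk hr t.isLt p.isLt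
      have h1 : (↑t+1)*(k₁+k₂+1) ≤ r*(k₁+k₂+1) := Nat.mul_le_mul_right (k₁+k₂+1) (by omega)
      have h2 : (↑t+1)*(k₁+k₂+1) = ↑t*(k₁+k₂+1) + (k₁+k₂+1) := by ring
      omega
    · have hb := large_bounds k₁ k₂ r hk₁ hkk hr t.isLt p.isLt
      have h1 : (r+1)*(k₁+k₂+1) ≤ (2*r-↑t)*(k₁+k₂+1) := Nat.mul_le_mul_right (k₁+k₂+1) (by omega)
      have h2 : (r+1)*(k₁+k₂+1) = r*(k₁+k₂+1) + (k₁+k₂+1) := by ring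
      have hq := q.isLt
      omega
  · rcases side with _ | _ <;> rcases side' with _ | _ <;> simp only [labI] at h
    · -- both false : small
      have hσt := sig_lt (r := r) (t := (↑t:ℕ)) hm p.isLt
      have hσs := sig_lt (r := r) (t := (↑s:ℕ)) hm q.isLt
      unfold smallV at h
      have h' : ↑t*(k₁+k₂+1) + (1 + sig (k₁+k₂+1) r ↑t ↑p)
          = ↑s*(k₁+k₂+1) + (1 + sig (k₁+k₂+1) r ↑s ↑q) := by omega
      obtain ⟨hts, hab⟩ := slot_inj (by omega) (by omega) (by omega) (by omega) h'
      have hts' : t = s := Fin.ext hts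
      subst hts'
      have hpq : p = q :=
        Fin.ext (sig_inj (r := r) (t := (↑t:ℕ)) hm p.isLt q.isLt (by omega))
      rw [hpq]
    · exfalso
      have hbs := small_bounds k₁ k₂ r hk₁ hkk hr t.isLt p.isLt
      have hbl := large_bounds k₁ k₂ r hk₁ hkk hr s.isLt q.isLt
      have h1 : (↑t+1)*(k₁+k₂+1) ≤ r*(k₁+k₂+1) := Nat.mul_le_mul_right (k₁+k₂+1) (by omega)
      have h2 : (↑t+1)*(k₁+k₂+1) = ↑t*(k₁+k₂+1) + (k₁+k₂+1) := by ring
      have h3 : (r+1)*(k₁+k₂+1) ≤ (2*r-↑s)*(k₁+k₂+1) := Nat.mul_le_mul_right (k₁+k₂+1) (by omega)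
      have h4 : (r+1)*(k₁+k₂+1) = r*(k₁+k₂+1) + (k₁+k₂+1) := by ring
      omega
    · exfalso
      have hbs := small_bounds k₁ k₂ r hk₁ hkk hr s.isLt q.isLt
      have hbl := large_bounds k₁ k₂ r hk₁ hkk hr t.isLt p.isLt
      have h1 : (↑s+1)*(k₁+k₂+1) ≤ r*(k₁+k₂+1) := Nat.mul_le_mul_right (k₁+k₂+1) (by omega)
      have h2 : (↑s+1)*(k₁+k₂+1) = ↑s*(k₁+k₂+1) + (k₁+k₂+1) := by ring
      have h3 : (r+1)*(k₁+k₂+1) ≤ (2*r-↑t)*(k₁+k₂+1) := Nat.mul_le_mul_right (k₁+k₂+1) (by omega)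
      have h4 : (r+1)*(k₁+k₂+1) = r*(k₁+k₂+1) + (k₁+k₂+1) := by ring
      omega
    · -- both true : large
      have hσt := sig_lt (r := r) (t := (↑t:ℕ)) hm p.isLt
      have hσs := sig_lt (r := r) (t := (↑s:ℕ)) hm q.isLt
      unfold largeV at h
      obtain ⟨hts, hab⟩ := slot_inj (by omega) (by omega) (by omega) (by omega) h
      have hts' : t = s := by
        have ht := t.isLt
        have hs := s.isLt
        exact Fin.ext (by omega)
      subst hts'
      have hpq : p = q :=
        Fin.ext (sig_inj (r := r) (t := (↑t:ℕ)) hm p.isLt q.isLt (by omega))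
      rw [hpq]

lemma labI_image :
    Finset.univ.image (labI k₁ k₂ r) = Finset.Icc 1 ((k₁+k₂+1)*(2*r+1)) := by
  apply Finset.eq_of_subset_of_card_le
  · intro v hv
    obtain ⟨i, _, rfl⟩ := Finset.mem_image.mp hv
    exact labI_mem k₁ k₂ r hk₁ hkk hr i
  · rw [Finset.card_image_of_injective _ (labI_inj k₁ k₂ r hk₁ hkk hr), Nat.card_Icc]
    simp only [Finset.card_univ, Fintype.card_sum, Fintype.card_fin, Fintype.card_prod,
      Fintype.card_bool]
    have : (k₁+k₂+1)*(2*r+1) = (k₁+k₂+1) + (k₁+k₂+1)*(r*2) := by ring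
    omega

def labF : Sym2 (WV k₁ k₂ r) → ℕ :=
  fun e => ∑ i : Idx k₁ k₂ r, if EE k₁ k₂ r i = e then labI k₁ k₂ r i else 0

omit hk₁ hkk in
lemma labF_EE (i : Idx k₁ k₂ r) : labF k₁ k₂ r (EE k₁ k₂ r i) = labI k₁ k₂ r i := by
  unfold labF
  have h0 : ∀ j ∈ (Finset.univ : Finset (Idx k₁ k₂ r)), j ≠ i →
      (if EE k₁ k₂ r j = EE k₁ k₂ r i then labI k₁ k₂ r j else 0) = 0 :=
    fun j _ hji => if_neg (fun hc => hji (EE_inj k₁ k₂ r hc))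
  rw [Finset.sum_eq_single_of_mem i (Finset.mem_univ i) h0, if_pos rfl]

omit hk₁ hkk in
lemma weight_formula (u : WV k₁ k₂ r) :
    weight (Gr k₁ k₂ r) (labF k₁ k₂ r) u
      = ∑ i : Idx k₁ k₂ r, if u ∈ EE k₁ k₂ r i then labI k₁ k₂ r i else 0 := by
  unfold weight
  rw [edgeFinset_eq]
  rw [Finset.sum_image (fun x _ y _ h => EE_inj k₁ k₂ r h)]
  refine Finset.sum_congr rfl (fun i _ => ?_)
  rw [labF_EE _ _ _ hr]

end LabelingW


section VertexWeights

open Finset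

variable (k₁ k₂ r : ℕ)

-- sum helpers over ranges
lemma sum_ite_lt_range (f : ℕ → ℕ) {k n : ℕ} (h : k ≤ n) :
    ∑ q ∈ range n, (if q < k then f q else 0) = ∑ q ∈ range k, f q := by
  have h1 : ∑ q ∈ range k, (if q < k then f q else 0)
      = ∑ q ∈ range n, (if q < k then f q else 0) :=
    Finset.sum_subset (Finset.range_subset_range.mpr h)
      (fun x _ hnx => if_neg (by simp only [Finset.mem_range] at hnx; omega))
  rw [← h1]
  exact Finset.sum_congr rfl (fun q hq => if_pos (Finset.mem_range.mp hq))

lemma sum_ite_eq_range (f : ℕ → ℕ) {a n : ℕ} (h : a < n) :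
    ∑ q ∈ range n, (if q = a then f q else 0) = f a := by
  rw [Finset.sum_eq_single_of_mem a (Finset.mem_range.mpr h)
    (fun b _ hba => if_neg hba), if_pos rfl]

lemma sum_ite_or_range (f : ℕ → ℕ) {k a n : ℕ} (hk : k ≤ a) (ha : a < n) :
    ∑ q ∈ range n, (if q < k ∨ q = a then f q else 0)
      = (∑ q ∈ range k, f q) + f a := by
  have split : ∀ q, (if q < k ∨ q = a then f q else 0)
      = (if q < k then f q else 0) + (if q = a then f q else 0) := by
    intro q; split_ifs <;> omega
  rw [Finset.sum_congr rfl (fun q _ => split q), Finset.sum_add_distrib,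
    sum_ite_lt_range f (by omega), sum_ite_eq_range f ha]

lemma sum_ite_ge_range (f : ℕ → ℕ) {k n : ℕ} :
    ∑ q ∈ range n, (if k ≤ q then f q else 0) = ∑ q ∈ Ico k n, f q := by
  rw [← Finset.sum_filter]
  congr 1
  ext q
  simp only [Finset.mem_filter, Finset.mem_Ico, Finset.mem_range]
  omega

lemma ite_sum_pull (c : Prop) [Decidable c] {α : Type*} (s : Finset α) (f : α → ℕ) :
    ∑ t ∈ s, (if c then f t else 0) = if c then ∑ t ∈ s, f t else 0 := by
  split_ifs <;> simp

-- endpoint identification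
lemma cA_eq_endA_iff (q : ℕ) : cA k₁ k₂ = endA k₁ k₂ q ↔ q < k₁ := by
  unfold endA cA cB; split_ifs with h <;> simp [h]

lemma cA_eq_endB_iff (q : ℕ) : cA k₁ k₂ = endB k₁ k₂ q ↔ k₁ + k₂ ≤ q := by
  unfold endB cA; split_ifs with h h2 <;> simp <;> omega

lemma cB_eq_endA_iff (q : ℕ) : cB k₁ k₂ = endA k₁ k₂ q ↔ k₁ ≤ q := by
  unfold endA cA cB; split_ifs with h <;> simp <;> omega

lemma cB_ne_endB (q : ℕ) : ¬ (cB k₁ k₂ = endB k₁ k₂ q) := by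
  unfold endB cA cB; split_ifs with h h2 <;> simp

lemma x_ne_endA (i : Fin k₁) (q : ℕ) :
    ¬ ((Sum.inr (Sum.inl i) : DSV k₁ k₂) = endA k₁ k₂ q) := by
  unfold endA cA cB; split_ifs with h <;> simp

lemma x_eq_endB_iff (i : Fin k₁) (q : ℕ) :
    (Sum.inr (Sum.inl i) : DSV k₁ k₂) = endB k₁ k₂ q ↔ q = ↑i := by
  have hi := i.isLt
  unfold endB cA; split_ifs with h h2 <;> simp [Fin.ext_iff] <;> omega

lemma y_ne_endA (j : Fin k₂) (q : ℕ) :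
    ¬ ((Sum.inr (Sum.inr j) : DSV k₁ k₂) = endA k₁ k₂ q) := by
  unfold endA cA cB; split_ifs with h <;> simp

lemma y_eq_endB_iff (j : Fin k₂) (q : ℕ) :
    (Sum.inr (Sum.inr j) : DSV k₁ k₂) = endB k₁ k₂ q ↔ q = k₁ + ↑j := by
  have hj := j.isLt
  unfold endB cA; split_ifs with h h2 <;> simp [Fin.ext_iff] <;> omega

variable (hk₁ : 1 ≤ k₁) (hkk : k₁ ≤ k₂) (hr : 1 ≤ r)

include hr in
lemma weight_split (u : WV k₁ k₂ r) :
    weight (Gr k₁ k₂ r) (labF k₁ k₂ r) u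
      = (∑ q : Fin (k₁+k₂+1),
          (if u ∈ EE k₁ k₂ r (Sum.inl q) then bV (k₁+k₂+1) r ↑q else 0))
        + ∑ q : Fin (k₁+k₂+1), ∑ t : Fin r,
            ((if u ∈ EE k₁ k₂ r (Sum.inr (q,t,true)) then largeV (k₁+k₂+1) r ↑t ↑q else 0)
              + (if u ∈ EE k₁ k₂ r (Sum.inr (q,t,false)) then smallV (k₁+k₂+1) r ↑t ↑q else 0)) := by
  rw [weight_formula _ _ _ hr, Fintype.sum_sum_type]
  congr 1
  rw [Fintype.sum_prod_type]
  refine Finset.sum_congr rfl (fun q _ => ?_)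
  rw [Fintype.sum_prod_type]
  refine Finset.sum_congr rfl (fun t _ => ?_)
  rw [Fintype.sum_bool]
  rfl

include hk₁ hkk hr in
lemma weight_cA :
    weight (Gr k₁ k₂ r) (labF k₁ k₂ r) (Sum.inl (cA k₁ k₂)) = W1V (k₁+k₂+1) r k₁ := by
  rw [weight_split k₁ k₂ r hr]
  have hbase : ∀ q : Fin (k₁+k₂+1),
      (if (Sum.inl (cA k₁ k₂) : WV k₁ k₂ r) ∈ EE k₁ k₂ r (Sum.inl q)
        then bV (k₁+k₂+1) r ↑q else 0)
      = (if (↑q < k₁ ∨ (↑q:ℕ) = k₁+k₂) then bV (k₁+k₂+1) r ↑q else 0) := by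
    intro q
    congr 1
    simp only [EE, Sym2.mem_iff, Sum.inl.injEq, eq_iff_iff]
    rw [cA_eq_endA_iff, cA_eq_endB_iff]
    omega
  have hcor : ∀ (q : Fin (k₁+k₂+1)) (t : Fin r),
      ((if (Sum.inl (cA k₁ k₂) : WV k₁ k₂ r) ∈ EE k₁ k₂ r (Sum.inr (q,t,true))
          then largeV (k₁+k₂+1) r ↑t ↑q else 0)
        + (if (Sum.inl (cA k₁ k₂) : WV k₁ k₂ r) ∈ EE k₁ k₂ r (Sum.inr (q,t,false))
          then smallV (k₁+k₂+1) r ↑t ↑q else 0))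
      = ((if (↑q < k₁) then largeV (k₁+k₂+1) r ↑t ↑q else 0)
          + (if ((↑q:ℕ) = k₁+k₂) then smallV (k₁+k₂+1) r ↑t ↑q else 0)) := by
    intro q t
    congr 1
    · congr 1
      simp only [EE, if_true, Sym2.mem_iff, Sum.inl.injEq, eq_iff_iff,
        reduceCtorEq, or_false]
      exact cA_eq_endA_iff k₁ k₂ ↑q
    · congr 1
      simp only [EE, Bool.false_eq_true, if_false, Sym2.mem_iff, Sum.inl.injEq, eq_iff_iff,
        reduceCtorEq, or_false]
      rw [cA_eq_endB_iff]
      omega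
  rw [Finset.sum_congr rfl (fun q _ => hbase q),
    Finset.sum_congr rfl (fun q _ => Finset.sum_congr rfl (fun t _ => hcor q t))]
  have h1 : ∑ q : Fin (k₁+k₂+1), (if (↑q < k₁ ∨ (↑q:ℕ) = k₁+k₂) then bV (k₁+k₂+1) r ↑q else 0)
      = ∑ q ∈ range (k₁+k₂+1), (if (q < k₁ ∨ q = k₁+k₂) then bV (k₁+k₂+1) r q else 0) :=
    Fin.sum_univ_eq_sum_range
      (fun q => if (q < k₁ ∨ q = k₁+k₂) then bV (k₁+k₂+1) r q else 0) (k₁+k₂+1)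
  have h2 : ∀ q : Fin (k₁+k₂+1),
      ∑ t : Fin r, ((if (↑q < k₁) then largeV (k₁+k₂+1) r ↑t ↑q else 0)
          + (if ((↑q:ℕ) = k₁+k₂) then smallV (k₁+k₂+1) r ↑t ↑q else 0))
      = (if (↑q < k₁) then ∑ t ∈ range r, largeV (k₁+k₂+1) r t ↑q else 0)
          + (if ((↑q:ℕ) = k₁+k₂) then ∑ t ∈ range r, smallV (k₁+k₂+1) r t ↑q else 0) := by
    intro q
    rw [Finset.sum_add_distrib, ite_sum_pull, ite_sum_pull]
    congr 1
    · congr 1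
      exact Fin.sum_univ_eq_sum_range (fun t => largeV (k₁+k₂+1) r t ↑q) r
    · congr 1
      exact Fin.sum_univ_eq_sum_range (fun t => smallV (k₁+k₂+1) r t ↑q) r
  rw [h1, Finset.sum_congr rfl (fun q _ => h2 q)]
  have h3 : ∑ q : Fin (k₁+k₂+1),
      ((if (↑q < k₁) then ∑ t ∈ range r, largeV (k₁+k₂+1) r t ↑q else 0)
        + (if ((↑q:ℕ) = k₁+k₂) then ∑ t ∈ range r, smallV (k₁+k₂+1) r t ↑q else 0))
      = ∑ q ∈ range (k₁+k₂+1),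
          ((if (q < k₁) then ∑ t ∈ range r, largeV (k₁+k₂+1) r t q else 0)
            + (if (q = k₁+k₂) then ∑ t ∈ range r, smallV (k₁+k₂+1) r t q else 0)) :=
    Fin.sum_univ_eq_sum_range
      (fun q => (if (q < k₁) then ∑ t ∈ range r, largeV (k₁+k₂+1) r t q else 0)
        + (if (q = k₁+k₂) then ∑ t ∈ range r, smallV (k₁+k₂+1) r t q else 0)) (k₁+k₂+1)
  rw [h3, Finset.sum_add_distrib, sum_ite_or_range _ (by omega) (by omega),
    sum_ite_lt_range _ (by omega), sum_ite_eq_range _ (by omega)]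
  unfold W1V
  have hmm : k₁+k₂+1-1 = k₁+k₂ := by omega
  rw [hmm]
  ring

include hk₁ hkk hr in
lemma weight_cB :
    weight (Gr k₁ k₂ r) (labF k₁ k₂ r) (Sum.inl (cB k₁ k₂)) = W2V (k₁+k₂+1) r k₁ := by
  rw [weight_split k₁ k₂ r hr]
  have hbase : ∀ q : Fin (k₁+k₂+1),
      (if (Sum.inl (cB k₁ k₂) : WV k₁ k₂ r) ∈ EE k₁ k₂ r (Sum.inl q)
        then bV (k₁+k₂+1) r ↑q else 0)
      = (if k₁ ≤ ↑q then bV (k₁+k₂+1) r ↑q else 0) := by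
    intro q
    congr 1
    simp only [EE, Sym2.mem_iff, Sum.inl.injEq, eq_iff_iff]
    rw [cB_eq_endA_iff]
    have := cB_ne_endB k₁ k₂ ↑q
    tauto
  have hcor : ∀ (q : Fin (k₁+k₂+1)) (t : Fin r),
      ((if (Sum.inl (cB k₁ k₂) : WV k₁ k₂ r) ∈ EE k₁ k₂ r (Sum.inr (q,t,true))
          then largeV (k₁+k₂+1) r ↑t ↑q else 0)
        + (if (Sum.inl (cB k₁ k₂) : WV k₁ k₂ r) ∈ EE k₁ k₂ r (Sum.inr (q,t,false))
          then smallV (k₁+k₂+1) r ↑t ↑q else 0))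
      = (if k₁ ≤ ↑q then largeV (k₁+k₂+1) r ↑t ↑q else 0) := by
    intro q t
    have he1 : ((Sum.inl (cB k₁ k₂) : WV k₁ k₂ r) ∈ EE k₁ k₂ r (Sum.inr (q,t,true)))
        = (k₁ ≤ ↑q) := by
      simp only [EE, if_true, Sym2.mem_iff, Sum.inl.injEq, eq_iff_iff,
        reduceCtorEq, or_false]
      rw [cB_eq_endA_iff]
    have he2 : ¬ ((Sum.inl (cB k₁ k₂) : WV k₁ k₂ r) ∈ EE k₁ k₂ r (Sum.inr (q,t,false))) := by
      simp only [EE, Bool.false_eq_true, if_false, Sym2.mem_iff, Sum.inl.injEq,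
        reduceCtorEq, or_false]
      exact cB_ne_endB k₁ k₂ ↑q
    simp only [he1, if_neg he2]
    omega
  rw [Finset.sum_congr rfl (fun q _ => hbase q),
    Finset.sum_congr rfl (fun q _ => Finset.sum_congr rfl (fun t _ => hcor q t))]
  have h1 : ∑ q : Fin (k₁+k₂+1), (if k₁ ≤ ↑q then bV (k₁+k₂+1) r ↑q else 0)
      = ∑ q ∈ range (k₁+k₂+1), (if k₁ ≤ q then bV (k₁+k₂+1) r q else 0) :=
    Fin.sum_univ_eq_sum_range (fun q => if k₁ ≤ q then bV (k₁+k₂+1) r q else 0) (k₁+k₂+1)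
  have h2 : ∀ q : Fin (k₁+k₂+1),
      ∑ t : Fin r, (if k₁ ≤ ↑q then largeV (k₁+k₂+1) r ↑t ↑q else 0)
      = (if k₁ ≤ ↑q then ∑ t ∈ range r, largeV (k₁+k₂+1) r t ↑q else 0) := by
    intro q
    rw [ite_sum_pull]
    congr 1
    exact Fin.sum_univ_eq_sum_range (fun t => largeV (k₁+k₂+1) r t ↑q) r
  rw [h1, Finset.sum_congr rfl (fun q _ => h2 q)]
  have h3 : ∑ q : Fin (k₁+k₂+1),
      (if k₁ ≤ ↑q then ∑ t ∈ range r, largeV (k₁+k₂+1) r t ↑q else 0)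
      = ∑ q ∈ range (k₁+k₂+1), (if k₁ ≤ q then ∑ t ∈ range r, largeV (k₁+k₂+1) r t q else 0) :=
    Fin.sum_univ_eq_sum_range
      (fun q => if k₁ ≤ q then ∑ t ∈ range r, largeV (k₁+k₂+1) r t q else 0) (k₁+k₂+1)
  rw [h3, sum_ite_ge_range, sum_ite_ge_range]
  have e1 : k₁+k₂+1 = (k₁+k₂)+1 := rfl
  rw [e1, Finset.sum_Ico_succ_top (by omega), Finset.sum_Ico_succ_top (by omega)]
  unfold W2V
  have hmm : k₁+k₂+1-1 = k₁+k₂ := by omega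
  rw [hmm]
  ring

include hk₁ hkk hr in
lemma weight_x (i : Fin k₁) :
    weight (Gr k₁ k₂ r) (labF k₁ k₂ r) (Sum.inl (Sum.inr (Sum.inl i))) = TV (k₁+k₂+1) r := by
  rw [weight_split k₁ k₂ r hr]
  have hbase : ∀ q : Fin (k₁+k₂+1),
      (if (Sum.inl (Sum.inr (Sum.inl i)) : WV k₁ k₂ r) ∈ EE k₁ k₂ r (Sum.inl q)
        then bV (k₁+k₂+1) r ↑q else 0)
      = (if (↑q:ℕ) = ↑i then bV (k₁+k₂+1) r ↑q else 0) := by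
    intro q
    congr 1
    simp only [EE, Sym2.mem_iff, Sum.inl.injEq, eq_iff_iff]
    rw [x_eq_endB_iff]
    have := x_ne_endA k₁ k₂ i ↑q
    tauto
  have hcor : ∀ (q : Fin (k₁+k₂+1)) (t : Fin r),
      ((if (Sum.inl (Sum.inr (Sum.inl i)) : WV k₁ k₂ r) ∈ EE k₁ k₂ r (Sum.inr (q,t,true))
          then largeV (k₁+k₂+1) r ↑t ↑q else 0)
        + (if (Sum.inl (Sum.inr (Sum.inl i)) : WV k₁ k₂ r) ∈ EE k₁ k₂ r (Sum.inr (q,t,false))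
          then smallV (k₁+k₂+1) r ↑t ↑q else 0))
      = (if (↑q:ℕ) = ↑i then smallV (k₁+k₂+1) r ↑t ↑q else 0) := by
    intro q t
    have he1 : ¬ ((Sum.inl (Sum.inr (Sum.inl i)) : WV k₁ k₂ r) ∈ EE k₁ k₂ r (Sum.inr (q,t,true))) := by
      simp only [EE, if_true, Sym2.mem_iff, Sum.inl.injEq, reduceCtorEq, or_false]
      exact x_ne_endA k₁ k₂ i ↑q
    have he2 : ((Sum.inl (Sum.inr (Sum.inl i)) : WV k₁ k₂ r) ∈ EE k₁ k₂ r (Sum.inr (q,t,false)))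
        = ((↑q:ℕ) = ↑i) := by
      simp only [EE, Bool.false_eq_true, if_false, Sym2.mem_iff, Sum.inl.injEq, eq_iff_iff,
        reduceCtorEq, or_false]
      rw [x_eq_endB_iff]
    simp only [he2, if_neg he1]
    omega
  rw [Finset.sum_congr rfl (fun q _ => hbase q),
    Finset.sum_congr rfl (fun q _ => Finset.sum_congr rfl (fun t _ => hcor q t))]
  have h1 : ∑ q : Fin (k₁+k₂+1), (if (↑q:ℕ) = ↑i then bV (k₁+k₂+1) r ↑q else 0)
      = ∑ q ∈ range (k₁+k₂+1), (if q = ↑i then bV (k₁+k₂+1) r q else 0) :=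
    Fin.sum_univ_eq_sum_range (fun q => if q = ↑i then bV (k₁+k₂+1) r q else 0) (k₁+k₂+1)
  have h2 : ∀ q : Fin (k₁+k₂+1),
      ∑ t : Fin r, (if (↑q:ℕ) = ↑i then smallV (k₁+k₂+1) r ↑t ↑q else 0)
      = (if (↑q:ℕ) = ↑i then ∑ t ∈ range r, smallV (k₁+k₂+1) r t ↑q else 0) := by
    intro q
    rw [ite_sum_pull]
    congr 1
    exact Fin.sum_univ_eq_sum_range (fun t => smallV (k₁+k₂+1) r t ↑q) r
  rw [h1, Finset.sum_congr rfl (fun q _ => h2 q)]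
  have h3 : ∑ q : Fin (k₁+k₂+1),
      (if (↑q:ℕ) = ↑i then ∑ t ∈ range r, smallV (k₁+k₂+1) r t ↑q else 0)
      = ∑ q ∈ range (k₁+k₂+1), (if q = ↑i then ∑ t ∈ range r, smallV (k₁+k₂+1) r t q else 0) :=
    Fin.sum_univ_eq_sum_range
      (fun q => if q = ↑i then ∑ t ∈ range r, smallV (k₁+k₂+1) r t q else 0) (k₁+k₂+1)
  rw [h3, sum_ite_eq_range _ (by omega), sum_ite_eq_range _ (by omega)]
  exact leaf_eq (by omega) hr (by have := i.isLt; omega)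

include hk₁ hkk hr in
lemma weight_y (j : Fin k₂) :
    weight (Gr k₁ k₂ r) (labF k₁ k₂ r) (Sum.inl (Sum.inr (Sum.inr j))) = TV (k₁+k₂+1) r := by
  rw [weight_split k₁ k₂ r hr]
  have hbase : ∀ q : Fin (k₁+k₂+1),
      (if (Sum.inl (Sum.inr (Sum.inr j)) : WV k₁ k₂ r) ∈ EE k₁ k₂ r (Sum.inl q)
        then bV (k₁+k₂+1) r ↑q else 0)
      = (if (↑q:ℕ) = k₁+↑j then bV (k₁+k₂+1) r ↑q else 0) := by
    intro q
    congr 1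
    simp only [EE, Sym2.mem_iff, Sum.inl.injEq, eq_iff_iff]
    rw [y_eq_endB_iff]
    have := y_ne_endA k₁ k₂ j ↑q
    tauto
  have hcor : ∀ (q : Fin (k₁+k₂+1)) (t : Fin r),
      ((if (Sum.inl (Sum.inr (Sum.inr j)) : WV k₁ k₂ r) ∈ EE k₁ k₂ r (Sum.inr (q,t,true))
          then largeV (k₁+k₂+1) r ↑t ↑q else 0)
        + (if (Sum.inl (Sum.inr (Sum.inr j)) : WV k₁ k₂ r) ∈ EE k₁ k₂ r (Sum.inr (q,t,false))
          then smallV (k₁+k₂+1) r ↑t ↑q else 0))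
      = (if (↑q:ℕ) = k₁+↑j then smallV (k₁+k₂+1) r ↑t ↑q else 0) := by
    intro q t
    have he1 : ¬ ((Sum.inl (Sum.inr (Sum.inr j)) : WV k₁ k₂ r) ∈ EE k₁ k₂ r (Sum.inr (q,t,true))) := by
      simp only [EE, if_true, Sym2.mem_iff, Sum.inl.injEq, reduceCtorEq, or_false]
      exact y_ne_endA k₁ k₂ j ↑q
    have he2 : ((Sum.inl (Sum.inr (Sum.inr j)) : WV k₁ k₂ r) ∈ EE k₁ k₂ r (Sum.inr (q,t,false)))
        = ((↑q:ℕ) = k₁+↑j) := by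
      simp only [EE, Bool.false_eq_true, if_false, Sym2.mem_iff, Sum.inl.injEq, eq_iff_iff,
        reduceCtorEq, or_false]
      rw [y_eq_endB_iff]
    simp only [he2, if_neg he1]
    omega
  rw [Finset.sum_congr rfl (fun q _ => hbase q),
    Finset.sum_congr rfl (fun q _ => Finset.sum_congr rfl (fun t _ => hcor q t))]
  have h1 : ∑ q : Fin (k₁+k₂+1), (if (↑q:ℕ) = k₁+↑j then bV (k₁+k₂+1) r ↑q else 0)
      = ∑ q ∈ range (k₁+k₂+1), (if q = k₁+↑j then bV (k₁+k₂+1) r q else 0) :=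
    Fin.sum_univ_eq_sum_range (fun q => if q = k₁+↑j then bV (k₁+k₂+1) r q else 0) (k₁+k₂+1)
  have h2 : ∀ q : Fin (k₁+k₂+1),
      ∑ t : Fin r, (if (↑q:ℕ) = k₁+↑j then smallV (k₁+k₂+1) r ↑t ↑q else 0)
      = (if (↑q:ℕ) = k₁+↑j then ∑ t ∈ range r, smallV (k₁+k₂+1) r t ↑q else 0) := by
    intro q
    rw [ite_sum_pull]
    congr 1
    exact Fin.sum_univ_eq_sum_range (fun t => smallV (k₁+k₂+1) r t ↑q) r
  rw [h1, Finset.sum_congr rfl (fun q _ => h2 q)]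
  have h3 : ∑ q : Fin (k₁+k₂+1),
      (if (↑q:ℕ) = k₁+↑j then ∑ t ∈ range r, smallV (k₁+k₂+1) r t ↑q else 0)
      = ∑ q ∈ range (k₁+k₂+1), (if q = k₁+↑j then ∑ t ∈ range r, smallV (k₁+k₂+1) r t q else 0) :=
    Fin.sum_univ_eq_sum_range
      (fun q => if q = k₁+↑j then ∑ t ∈ range r, smallV (k₁+k₂+1) r t q else 0) (k₁+k₂+1)
  rw [h3, sum_ite_eq_range _ (by omega), sum_ite_eq_range _ (by omega)]
  exact leaf_eq (by omega) hr (by have := j.isLt; omega)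

include hk₁ hkk hr in
lemma weight_corona (p : Fin (k₁+k₂+1)) (w : Fin r) :
    weight (Gr k₁ k₂ r) (labF k₁ k₂ r) (Sum.inr (eG k₁ k₂ ↑p, w))
      = (k₁+k₂+1)*(2*r+1)+1 := by
  rw [weight_split k₁ k₂ r hr]
  have hbase : ∀ q : Fin (k₁+k₂+1),
      (if (Sum.inr (eG k₁ k₂ ↑p, w) : WV k₁ k₂ r) ∈ EE k₁ k₂ r (Sum.inl q)
        then bV (k₁+k₂+1) r ↑q else 0) = 0 := by
    intro q
    rw [if_neg]
    simp only [EE, Sym2.mem_iff, reduceCtorEq, or_self]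
    exact fun h => h
  have hcond : ∀ (q : Fin (k₁+k₂+1)) (t : Fin r) (side : Bool),
      ((Sum.inr (eG k₁ k₂ ↑p, w) : WV k₁ k₂ r) ∈ EE k₁ k₂ r (Sum.inr (q,t,side)))
        = (q = p ∧ t = w) := by
    intro q t side
    simp only [EE, Sym2.mem_iff, reduceCtorEq, false_or, Sum.inr.injEq, Prod.mk.injEq,
      eq_iff_iff]
    constructor
    · rintro ⟨h1, h2⟩
      exact ⟨Fin.ext (eG_inj k₁ k₂ p.isLt q.isLt (congrArg Subtype.val h1)).symm, h2.symm⟩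
    · rintro ⟨h1, h2⟩
      subst h1; subst h2; exact ⟨rfl, rfl⟩
  have hcor : ∀ (q : Fin (k₁+k₂+1)) (t : Fin r),
      ((if (Sum.inr (eG k₁ k₂ ↑p, w) : WV k₁ k₂ r) ∈ EE k₁ k₂ r (Sum.inr (q,t,true))
          then largeV (k₁+k₂+1) r ↑t ↑q else 0)
        + (if (Sum.inr (eG k₁ k₂ ↑p, w) : WV k₁ k₂ r) ∈ EE k₁ k₂ r (Sum.inr (q,t,false))
          then smallV (k₁+k₂+1) r ↑t ↑q else 0))
      = (if q = p ∧ t = w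
          then largeV (k₁+k₂+1) r ↑t ↑q + smallV (k₁+k₂+1) r ↑t ↑q else 0) := by
    intro q t
    simp only [hcond q t true, hcond q t false]
    split_ifs <;> omega
  rw [Finset.sum_congr rfl (fun q _ => hbase q),
    Finset.sum_congr rfl (fun q _ => Finset.sum_congr rfl (fun t _ => hcor q t))]
  rw [Finset.sum_const_zero, zero_add]
  have hout : ∑ q : Fin (k₁+k₂+1), ∑ t : Fin r,
      (if q = p ∧ t = w then largeV (k₁+k₂+1) r ↑t ↑q + smallV (k₁+k₂+1) r ↑t ↑q else 0)
      = largeV (k₁+k₂+1) r ↑w ↑p + smallV (k₁+k₂+1) r ↑w ↑p := by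
    rw [Finset.sum_eq_single_of_mem p (Finset.mem_univ p)]
    · rw [Finset.sum_eq_single_of_mem w (Finset.mem_univ w)]
      · rw [if_pos ⟨rfl, rfl⟩]
      · intro t _ htw
        rw [if_neg (fun hc => htw hc.2)]
    · intro q _ hqp
      apply Finset.sum_eq_zero
      intro t _
      rw [if_neg (fun hc => hqp hc.1)]
  rw [hout]
  have := small_large (m := k₁+k₂+1) (t := (↑w:ℕ)) (p := (↑p:ℕ)) (by omega) w.isLt p.isLt
  omega

end VertexWeights


section Final

open Finset

variable (k₁ k₂ r : ℕ) (hk₁ : 1 ≤ k₁) (hkk : k₁ ≤ k₂) (hr : 1 ≤ r)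

include hk₁ hkk hr in
lemma weights_ne : ∀ u v, (Gr k₁ k₂ r).Adj u v →
    weight (Gr k₁ k₂ r) (labF k₁ k₂ r) u ≠ weight (Gr k₁ k₂ r) (labF k₁ k₂ r) v := by
  have hm : (3:ℕ) ≤ k₁+k₂+1 := by omega
  have hG1 := G1 (m := k₁+k₂+1) (r := r) hm hr
  have hG2 := G2 (m := k₁+k₂+1) (r := r) (k₁ := k₁) (k₂ := k₂) hm hr hk₁ hkk rfl
  have hG3 := G3 (m := k₁+k₂+1) (r := r) (k₁ := k₁) (k₂ := k₂) hm hr hk₁ hkk rfl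
  have hG4 := G4 (m := k₁+k₂+1) (r := r) (k₁ := k₁) (k₂ := k₂) hm hr hk₁ hkk rfl
  have hG5 := G5 (m := k₁+k₂+1) (r := r) (k₁ := k₁) (k₂ := k₂) hm hr hk₁ hkk rfl
  have hG6 := G6 (m := k₁+k₂+1) (r := r) (k₁ := k₁) (k₂ := k₂) hm hr hk₁ hkk rfl
  have hwA := weight_cA k₁ k₂ r hk₁ hkk hr
  have hwB := weight_cB k₁ k₂ r hk₁ hkk hr
  intro u v h
  unfold Gr edgeCorona at h
  rw [SimpleGraph.fromRel_adj] at h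
  obtain ⟨hne, hrel⟩ := h
  rcases u with u0 | ⟨e, w⟩ <;> rcases v with v0 | ⟨e', w'⟩
  · -- both original vertices
    have hadj : (doubleStar k₁ k₂).Adj u0 v0 := by
      rcases hrel with h | h
      · exact h
      · exact h.symm
    unfold doubleStar at hadj
    rw [SimpleGraph.fromRel_adj] at hadj
    obtain ⟨hne0, hrel0⟩ := hadj
    rcases u0 with (⟨⟩|⟨⟩)|(i|j) <;> rcases v0 with (⟨⟩|⟨⟩)|(i'|j') <;>
      simp only [or_false, false_or, or_self] at hrel0
    · -- cA cB
      rw [show (Sum.inl (Sum.inl (Sum.inl ())) : WV k₁ k₂ r) = Sum.inl (cA k₁ k₂) from rfl,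
        show (Sum.inl (Sum.inl (Sum.inr ())) : WV k₁ k₂ r) = Sum.inl (cB k₁ k₂) from rfl,
        hwA, hwB]
      omega
    · -- cA x
      rw [show (Sum.inl (Sum.inl (Sum.inl ())) : WV k₁ k₂ r) = Sum.inl (cA k₁ k₂) from rfl,
        hwA, weight_x k₁ k₂ r hk₁ hkk hr i']
      omega
    · -- cB cA
      rw [show (Sum.inl (Sum.inl (Sum.inr ())) : WV k₁ k₂ r) = Sum.inl (cB k₁ k₂) from rfl,
        show (Sum.inl (Sum.inl (Sum.inl ())) : WV k₁ k₂ r) = Sum.inl (cA k₁ k₂) from rfl,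
        hwA, hwB]
      omega
    · -- cB y
      rw [show (Sum.inl (Sum.inl (Sum.inr ())) : WV k₁ k₂ r) = Sum.inl (cB k₁ k₂) from rfl,
        hwB, weight_y k₁ k₂ r hk₁ hkk hr j']
      omega
    · -- x cA
      rw [show (Sum.inl (Sum.inl (Sum.inl ())) : WV k₁ k₂ r) = Sum.inl (cA k₁ k₂) from rfl,
        hwA, weight_x k₁ k₂ r hk₁ hkk hr i]
      omega
    · -- y cB
      rw [show (Sum.inl (Sum.inl (Sum.inr ())) : WV k₁ k₂ r) = Sum.inl (cB k₁ k₂) from rfl,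
        hwB, weight_y k₁ k₂ r hk₁ hkk hr j]
      omega
  · -- original vs corona
    obtain ⟨p, hp, hep⟩ := eG_cover k₁ k₂ e'.1 e'.2
    have he0 : e' = eG k₁ k₂ p := Subtype.ext hep
    subst he0
    have hwc : weight (Gr k₁ k₂ r) (labF k₁ k₂ r) (Sum.inr (eG k₁ k₂ p, w'))
        = (k₁+k₂+1)*(2*r+1)+1 := weight_corona k₁ k₂ r hk₁ hkk hr ⟨p, hp⟩ w'
    rw [hwc]
    rcases u0 with (⟨⟩|⟨⟩)|(i|j)
    · rw [show (Sum.inl (Sum.inl (Sum.inl ())) : WV k₁ k₂ r) = Sum.inl (cA k₁ k₂) from rfl,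
        hwA]
      omega
    · rw [show (Sum.inl (Sum.inl (Sum.inr ())) : WV k₁ k₂ r) = Sum.inl (cB k₁ k₂) from rfl,
        hwB]
      omega
    · rw [weight_x k₁ k₂ r hk₁ hkk hr i]
      omega
    · rw [weight_y k₁ k₂ r hk₁ hkk hr j]
      omega
  · -- corona vs original
    obtain ⟨p, hp, hep⟩ := eG_cover k₁ k₂ e.1 e.2
    have he0 : e = eG k₁ k₂ p := Subtype.ext hep
    subst he0
    have hwc : weight (Gr k₁ k₂ r) (labF k₁ k₂ r) (Sum.inr (eG k₁ k₂ p, w))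
        = (k₁+k₂+1)*(2*r+1)+1 := weight_corona k₁ k₂ r hk₁ hkk hr ⟨p, hp⟩ w
    rw [hwc]
    rcases v0 with (⟨⟩|⟨⟩)|(i|j)
    · rw [show (Sum.inl (Sum.inl (Sum.inl ())) : WV k₁ k₂ r) = Sum.inl (cA k₁ k₂) from rfl,
        hwA]
      omega
    · rw [show (Sum.inl (Sum.inl (Sum.inr ())) : WV k₁ k₂ r) = Sum.inl (cB k₁ k₂) from rfl,
        hwB]
      omega
    · rw [weight_x k₁ k₂ r hk₁ hkk hr i]
      omega
    · rw [weight_y k₁ k₂ r hk₁ hkk hr j]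
      omega
  · -- corona vs corona : not adjacent
    exfalso
    simp only [SimpleGraph.bot_adj, and_false, or_self] at hrel

include hk₁ hkk hr in
lemma isLA : IsLocalAntimagic (Gr k₁ k₂ r) (labF k₁ k₂ r) := by
  constructor
  · rw [card_edge]
    refine ⟨?_, ?_, ?_⟩
    · intro e he
      obtain ⟨i, rfl⟩ := EE_cover k₁ k₂ r e he
      rw [labF_EE _ _ _ hr]
      have := Finset.mem_Icc.mp (labI_mem k₁ k₂ r hk₁ hkk hr i)
      exact Set.mem_Icc.mpr this
    · intro e1 h1 e2 h2 heq
      obtain ⟨i, rfl⟩ := EE_cover k₁ k₂ r e1 h1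
      obtain ⟨j, rfl⟩ := EE_cover k₁ k₂ r e2 h2
      rw [labF_EE _ _ _ hr, labF_EE _ _ _ hr] at heq
      rw [labI_inj k₁ k₂ r hk₁ hkk hr heq]
    · intro v hv
      have hv' : v ∈ Finset.Icc 1 ((k₁+k₂+1)*(2*r+1)) :=
        Finset.mem_Icc.mpr (Set.mem_Icc.mp hv)
      rw [← labI_image k₁ k₂ r hk₁ hkk hr] at hv'
      obtain ⟨i, _, rfl⟩ := Finset.mem_image.mp hv'
      exact ⟨EE k₁ k₂ r i, EE_mem k₁ k₂ r i, labF_EE _ _ _ hr i⟩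
  · exact weights_ne k₁ k₂ r hk₁ hkk hr

include hk₁ hkk hr in
lemma colorCount_le : colorCount (Gr k₁ k₂ r) (labF k₁ k₂ r) ≤ 4 := by
  unfold colorCount
  have hsub : Finset.univ.image (weight (Gr k₁ k₂ r) (labF k₁ k₂ r))
      ⊆ {(k₁+k₂+1)*(2*r+1)+1, TV (k₁+k₂+1) r, W1V (k₁+k₂+1) r k₁, W2V (k₁+k₂+1) r k₁} := by
    intro x hx
    obtain ⟨u, _, rfl⟩ := Finset.mem_image.mp hx
    simp only [Finset.mem_insert, Finset.mem_singleton]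
    rcases u with ((⟨⟩|⟨⟩)|(i|j)) | ⟨e, w⟩
    · right; right; left
      exact weight_cA k₁ k₂ r hk₁ hkk hr
    · right; right; right
      exact weight_cB k₁ k₂ r hk₁ hkk hr
    · right; left
      exact weight_x k₁ k₂ r hk₁ hkk hr i
    · right; left
      exact weight_y k₁ k₂ r hk₁ hkk hr j
    · left
      obtain ⟨p, hp, hep⟩ := eG_cover k₁ k₂ e.1 e.2
      have he0 : e = eG k₁ k₂ p := Subtype.ext hep
      subst he0
      exact weight_corona k₁ k₂ r hk₁ hkk hr ⟨p, hp⟩ w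
  refine le_trans (Finset.card_le_card hsub) ?_
  refine le_trans (Finset.card_insert_le _ _) ?_
  refine Nat.succ_le_succ ?_
  refine le_trans (Finset.card_insert_le _ _) ?_
  refine Nat.succ_le_succ ?_
  refine le_trans (Finset.card_insert_le _ _) ?_
  refine Nat.succ_le_succ ?_
  exact Finset.card_singleton _ |>.le

include hk₁ hkk hr in
lemma three_le_colorCount (f : Sym2 (WV k₁ k₂ r) → ℕ)
    (hf : IsLocalAntimagic (Gr k₁ k₂ r) f) : 3 ≤ colorCount (Gr k₁ k₂ r) f := by
  have hcAB : (doubleStar k₁ k₂).Adj (cA k₁ k₂) (cB k₁ k₂) := by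
    unfold doubleStar cA cB
    rw [SimpleGraph.fromRel_adj]
    exact ⟨by simp, Or.inl trivial⟩
  set w0 : Fin r := ⟨0, by omega⟩
  set u1 : WV k₁ k₂ r := Sum.inl (cA k₁ k₂)
  set u2 : WV k₁ k₂ r := Sum.inl (cB k₁ k₂)
  set u3 : WV k₁ k₂ r := Sum.inr (eG k₁ k₂ (k₁+k₂), w0)
  have hmemA : cA k₁ k₂ ∈ (eG k₁ k₂ (k₁+k₂) : Sym2 (DSV k₁ k₂)) := by
    rw [eG_coe, endB_eq_cA k₁ k₂ (le_refl _)]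
    exact Sym2.mem_mk_right _ _
  have hmemB : cB k₁ k₂ ∈ (eG k₁ k₂ (k₁+k₂) : Sym2 (DSV k₁ k₂)) := by
    rw [eG_coe, endA_eq_cB k₁ k₂ (by omega)]
    exact Sym2.mem_mk_left _ _
  have h12 := hf.2 u1 u2 (Gr_adj_base k₁ k₂ r hcAB)
  have h13 := hf.2 u1 u3 (Gr_adj_corona k₁ k₂ r _ _ w0 hmemA)
  have h23 := hf.2 u2 u3 (Gr_adj_corona k₁ k₂ r _ _ w0 hmemB)
  have hsub : ({weight (Gr k₁ k₂ r) f u1, weight (Gr k₁ k₂ r) f u2,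
      weight (Gr k₁ k₂ r) f u3} : Finset ℕ)
      ⊆ Finset.univ.image (weight (Gr k₁ k₂ r) f) := by
    intro x hx
    simp only [Finset.mem_insert, Finset.mem_singleton] at hx
    rcases hx with rfl | rfl | rfl <;>
      exact Finset.mem_image.mpr ⟨_, Finset.mem_univ _, rfl⟩
  have hcard : ({weight (Gr k₁ k₂ r) f u1, weight (Gr k₁ k₂ r) f u2,
      weight (Gr k₁ k₂ r) f u3} : Finset ℕ).card = 3 := by
    rw [Finset.card_insert_of_notMem (by simp [h12, h13]),
      Finset.card_insert_of_notMem (by simp [h23]), Finset.card_singleton]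
  calc (3:ℕ) = _ := hcard.symm
  _ ≤ _ := Finset.card_le_card hsub

end Final

/-- For all integers `k₁, k₂ ≥ 1` with `k₁ ≤ k₂` and every integer `r ≥ 1`,
the local antimagic chromatic number of the edge-corona product of the double
star `S_{k₁,k₂}` with the empty graph on `r` vertices satisfies
`3 ≤ χ_la(S_{k₁,k₂} ⋄ K̄_r) ≤ 4`. -/
theorem chiLA_doubleStar_edgeCorona_empty {k₁ k₂ r : ℕ} (hk₁ : 1 ≤ k₁)
    (hk : k₁ ≤ k₂) (hr : 1 ≤ r) :
    3 ≤ chiLA (edgeCorona (doubleStar k₁ k₂) (⊥ : SimpleGraph (Fin r))) ∧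
      chiLA (edgeCorona (doubleStar k₁ k₂) (⊥ : SimpleGraph (Fin r))) ≤ 4 := by
  have hmemS : colorCount (Gr k₁ k₂ r) (labF k₁ k₂ r)
      ∈ {c | ∃ f, IsLocalAntimagic (Gr k₁ k₂ r) f ∧ colorCount (Gr k₁ k₂ r) f = c} :=
    ⟨labF k₁ k₂ r, isLA k₁ k₂ r hk₁ hk hr, rfl⟩
  constructor
  · have hS := Nat.sInf_mem (⟨_, hmemS⟩ : Set.Nonempty _)
    obtain ⟨f, hf, hc⟩ := hS
    unfold chiLA
    rw [← hc]
    exact three_le_colorCount k₁ k₂ r hk₁ hk hr f hf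
  · exact le_trans (Nat.sInf_le hmemS) (colorCount_le k₁ k₂ r hk₁ hk hr)

end LocalAntimagic
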